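/- Define γ : Ω → 𝒮² by γ(p) = (Re(p) × Im(p)) / (|Re(p)| · |Im(p)|), where a point of the absolute conic is written [0 : p] with p ∈ ℂ³ satisfying p·p = 0. Then γ is well-defined (independent of the choice of homogeneous representative and landing in the unit sphere), and for every rotation φ ∈ SO(3), acting on Ω via its complexification and on 𝒮² standardly, one has γ ∘ φ = φ ∘ γ. -/

import Mathlib

open Complex

/-- Real part of a vector in `ℂ³`. -/
def reV (p : Fin 3 → ℂ) : Fin 3 → ℝ := fun i => (p i).re

/-- Imaginary part of a vector in `ℂ³`. -/
def imV (p : Fin 3 → ℂ) : Fin 3 → ℝ := fun i => (p i).im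

/-- Euclidean norm on `ℝ³`. -/
noncomputable def enorm3 (v : Fin 3 → ℝ) : ℝ := Real.sqrt (∑ i, v i ^ 2)

/-- The map `γ : Ω → 𝒮²`, `γ(p) = (Re p × Im p)/(|Re p|·|Im p|)`, on homogeneous
coordinate vectors `p ∈ ℂ³` of points `[0:p]` of the absolute conic. -/
noncomputable def gammaMap (p : Fin 3 → ℂ) : Fin 3 → ℝ :=
  (1 / (enorm3 (reV p) * enorm3 (imV p))) • (crossProduct (reV p) (imV p))

/-! Write `p = a + i b`. On the conic, `|a| = |b|` and `a ⬝ b = 0`, so by Lagrange's identity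
`|a × b| = |a| |b|` and `γ p` is a unit vector. Multiplying `p` by `c = x + i y` replaces
`(a, b)` by `(x a - y b, x b + y a)`, which scales both norms by `|c|` and `a × b` by `|c|²`.
A real matrix commutes with taking real and imaginary parts, and the cofactor identity
`(M a) × (M b) = (adj M)ᵀ (a × b)` together with `adj M = Mᵀ` on `SO(3)` gives equivariance. -/

open Matrix

lemma dotProduct_self_nonneg {n : Type*} [Fintype n] (v : n → ℝ) : 0 ≤ v ⬝ᵥ v :=
  Finset.sum_nonneg fun i _ => mul_self_nonneg (v i)

lemma dotProduct_mulVec_self {R n : Type*} [CommRing R] [Fintype n] [DecidableEq n]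
    {M : Matrix n n R} (hM : Mᵀ * M = 1) (v : n → R) : (M *ᵥ v) ⬝ᵥ (M *ᵥ v) = v ⬝ᵥ v := by
  rw [dotProduct_mulVec, ← vecMul_transpose, vecMul_vecMul, hM, vecMul_one]

lemma adjugate_eq_transpose {R n : Type*} [CommRing R] [Fintype n] [DecidableEq n]
    {M : Matrix n n R} (hM : Mᵀ * M = 1) (hdet : M.det = 1) : M.adjugate = Mᵀ :=
  calc M.adjugate = Mᵀ * M * M.adjugate := by rw [hM, Matrix.one_mul]
    _ = Mᵀ := by rw [Matrix.mul_assoc, mul_adjugate, hdet, one_smul, Matrix.mul_one]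

lemma cross_mulVec_mulVec {R : Type*} [CommRing R] (M : Matrix (Fin 3) (Fin 3) R)
    (a b : Fin 3 → R) : (M *ᵥ a) ⨯₃ (M *ᵥ b) = M.adjugateᵀ *ᵥ (a ⨯₃ b) := by
  ext i
  fin_cases i <;>
  · simp [cross_apply, adjugate_fin_three, mulVec, dotProduct, Fin.sum_univ_three]
    ring

lemma cross_smul_sub_smul {R : Type*} [CommRing R] (x y : R) (a b : Fin 3 → R) :
    (x • a - y • b) ⨯₃ (x • b + y • a) = (x ^ 2 + y ^ 2) • (a ⨯₃ b) := by
  simp only [map_sub, map_add, map_smul, LinearMap.sub_apply,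
    LinearMap.smul_apply, cross_self, ← cross_anticomm a b]
  module

lemma sum_sq_eq_dotProduct_self (v : Fin 3 → ℝ) : ∑ i, v i ^ 2 = v ⬝ᵥ v := by
  simp only [dotProduct, sq]

lemma enorm3_eq_sqrt (v : Fin 3 → ℝ) : enorm3 v = √(v ⬝ᵥ v) := by
  rw [enorm3, sum_sq_eq_dotProduct_self]

lemma enorm3_sq (v : Fin 3 → ℝ) : enorm3 v ^ 2 = v ⬝ᵥ v := by
  rw [enorm3_eq_sqrt, Real.sq_sqrt (dotProduct_self_nonneg v)]

lemma enorm3_eq_zero {v : Fin 3 → ℝ} : enorm3 v = 0 ↔ v = 0 := by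
  rw [enorm3_eq_sqrt, Real.sqrt_eq_zero (dotProduct_self_nonneg v), dotProduct_self_eq_zero]

lemma enorm3_mulVec {M : Matrix (Fin 3) (Fin 3) ℝ} (hM : Mᵀ * M = 1) (v : Fin 3 → ℝ) :
    enorm3 (M *ᵥ v) = enorm3 v := by
  rw [enorm3_eq_sqrt, enorm3_eq_sqrt, dotProduct_mulVec_self hM]

lemma enorm3_smul_add_smul {a b : Fin 3 → ℝ} (hab : a ⬝ᵥ a = b ⬝ᵥ b) (horth : a ⬝ᵥ b = 0)
    (x y : ℝ) : enorm3 (x • a + y • b) = √(x ^ 2 + y ^ 2) * enorm3 a := by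
  rw [enorm3_eq_sqrt, enorm3_eq_sqrt, ← Real.sqrt_mul (by positivity)]
  congr 1
  simp only [dotProduct_add, add_dotProduct, dotProduct_smul, smul_dotProduct, smul_eq_mul,
    dotProduct_comm b a, horth, ← hab]
  ring

lemma sum_sq_eq_zero_iff (p : Fin 3 → ℂ) :
    ∑ i, p i ^ 2 = 0 ↔ reV p ⬝ᵥ reV p = imV p ⬝ᵥ imV p ∧ reV p ⬝ᵥ imV p = 0 := by
  simp only [Complex.ext_iff, Fin.sum_univ_three, Complex.add_re, Complex.add_im, sq,
    Complex.mul_re, Complex.mul_im, Complex.zero_re, Complex.zero_im, dotProduct, reV, imV]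
  constructor <;> rintro ⟨h₁, h₂⟩ <;> constructor <;> linarith

lemma reV_ne_zero {p : Fin 3 → ℂ} (hp : p ≠ 0) (h : ∑ i, p i ^ 2 = 0) : reV p ≠ 0 := by
  intro ha
  have hb : imV p = 0 := by
    rw [← dotProduct_self_eq_zero, ← ((sum_sq_eq_zero_iff p).1 h).1, ha, zero_dotProduct]
  exact hp (funext fun i => Complex.ext (congrFun ha i) (congrFun hb i))

lemma reV_smul (c : ℂ) (p : Fin 3 → ℂ) : reV (c • p) = c.re • reV p - c.im • imV p := by
  ext i
  simp [reV, imV, Complex.mul_re]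

lemma imV_smul (c : ℂ) (p : Fin 3 → ℂ) : imV (c • p) = c.re • imV p + c.im • reV p := by
  ext i
  simp [reV, imV, Complex.mul_im]

lemma reV_mulVec (M : Matrix (Fin 3) (Fin 3) ℝ) (p : Fin 3 → ℂ) :
    reV (fun i => ∑ j, (M i j : ℂ) * p j) = M *ᵥ reV p := by
  ext i
  simp [reV, mulVec, dotProduct, Complex.re_sum]

lemma imV_mulVec (M : Matrix (Fin 3) (Fin 3) ℝ) (p : Fin 3 → ℂ) :
    imV (fun i => ∑ j, (M i j : ℂ) * p j) = M *ᵥ imV p := by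
  ext i
  simp [imV, mulVec, dotProduct, Complex.im_sum]

lemma gammaMap_smul {p : Fin 3 → ℂ} (h : ∑ i, p i ^ 2 = 0) {c : ℂ} (hc : c ≠ 0) :
    gammaMap (c • p) = gammaMap p := by
  obtain ⟨hab, horth⟩ := (sum_sq_eq_zero_iff p).1 h
  have hk : 0 < c.re ^ 2 + c.im ^ 2 := by
    simpa [Complex.normSq_apply, sq] using Complex.normSq_pos.2 hc
  have hre : enorm3 (reV (c • p)) = √(c.re ^ 2 + c.im ^ 2) * enorm3 (reV p) := by
    rw [reV_smul, sub_eq_add_neg, ← neg_smul, enorm3_smul_add_smul hab horth, neg_sq]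
  have him : enorm3 (imV (c • p)) = √(c.re ^ 2 + c.im ^ 2) * enorm3 (imV p) := by
    rw [imV_smul, enorm3_smul_add_smul hab.symm (by rwa [dotProduct_comm])]
  rw [gammaMap, gammaMap, hre, him, reV_smul, imV_smul, cross_smul_sub_smul, smul_smul,
    mul_mul_mul_comm, Real.mul_self_sqrt hk.le]
  congr 1
  field_simp

lemma sum_sq_gammaMap {p : Fin 3 → ℂ} (hp : p ≠ 0) (h : ∑ i, p i ^ 2 = 0) :
    ∑ i, gammaMap p i ^ 2 = 1 := by
  obtain ⟨hab, horth⟩ := (sum_sq_eq_zero_iff p).1 h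
  have ha : enorm3 (reV p) ≠ 0 := enorm3_eq_zero.not.2 (reV_ne_zero hp h)
  have hb : enorm3 (imV p) ≠ 0 := by rwa [enorm3_eq_sqrt, ← hab, ← enorm3_eq_sqrt]
  rw [sum_sq_eq_dotProduct_self, gammaMap, dotProduct_smul, smul_dotProduct, cross_dot_cross,
    horth, zero_mul, sub_zero, ← enorm3_sq, ← enorm3_sq, smul_eq_mul, smul_eq_mul]
  field_simp

lemma gammaMap_mulVec {M : Matrix (Fin 3) (Fin 3) ℝ} (hM : Mᵀ * M = 1) (hdet : M.det = 1)
    (p : Fin 3 → ℂ) : gammaMap (fun i => ∑ j, (M i j : ℂ) * p j) = M *ᵥ gammaMap p := by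
  rw [gammaMap, gammaMap, reV_mulVec, imV_mulVec, enorm3_mulVec hM, enorm3_mulVec hM,
    cross_mulVec_mulVec, adjugate_eq_transpose hM hdet, transpose_transpose, mulVec_smul]

/-- `γ` is well defined on the absolute conic (independent of the
homogeneous representative, with values on the unit sphere) and is `SO(3)`-equivariant:
`γ ∘ φ = φ ∘ γ` for every rotation `φ`, acting on `Ω` via complexification. -/
theorem gammaMap_well_defined_and_equivariant :
    -- independence of the representative:
    (∀ p : Fin 3 → ℂ, p ≠ 0 → (∑ i, p i ^ 2) = 0 →
      ∀ c : ℂ, c ≠ 0 → gammaMap (c • p) = gammaMap p) ∧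
    -- values lie on the unit sphere:
    (∀ p : Fin 3 → ℂ, p ≠ 0 → (∑ i, p i ^ 2) = 0 →
      (∑ i, gammaMap p i ^ 2) = 1) ∧
    -- `SO(3)`-equivariance:
    (∀ p : Fin 3 → ℂ, p ≠ 0 → (∑ i, p i ^ 2) = 0 →
      ∀ M : Matrix (Fin 3) (Fin 3) ℝ, M.transpose * M = 1 → M.det = 1 →
        gammaMap (fun i => ∑ j, (M i j : ℂ) * p j) = M.mulVec (gammaMap p)) :=
  ⟨fun _ _ h _ hc => gammaMap_smul h hc, fun _ hp h => sum_sq_gammaMap hp h,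
    fun p _ _ _ hM hdet => gammaMap_mulVec hM hdet p⟩
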